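/- Let R be a commutative ring, A an Azumaya algebra over R, and M a left A-module. Then M is finitely generated projective as a left A-module if and only if M is finitely generated projective as an R-module. -/

import Mathlib

/-!
An Azumaya algebra `A` is separable over `R`. Since `A` is a faithful finitely generated projective
`R`-module, its trace ideal is all of `R`, which yields `f : A → R` with `f 1 = 1`; the preimage
`e = ∑ xᵢ ⊗ yᵢ` of `z ↦ f z • 1` under `A ⊗[R] Aᵐᵒᵖ ≃ End_R A` then satisfies `a e = e a` and
`∑ xᵢ yᵢ = 1`. For an `R`-projective `A`-module `M`, the map `m ↦ ∑ xᵢ ⊗ yᵢ m` is an `A`-linear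
section of the multiplication `A ⊗[R] M → M`, so `M` is a direct summand of the `A`-projective
module `A ⊗[R] M`. The other direction is transitivity of projectivity along `R → A`.
-/

open TensorProduct

/-- The canonical map `A ⊗[R] Aᵐᵒᵖ →ₗ[R] End_R(A)`, `(x ⊗ y) · z = x * z * y`. -/
noncomputable def azumayaMap (R A : Type*) [CommRing R] [Ring A] [Algebra R A] :
    A ⊗[R] Aᵐᵒᵖ →ₗ[R] Module.End R A :=
  TensorProduct.lift <| LinearMap.mk₂ R
    (fun x y => LinearMap.mulLeft R x ∘ₗ LinearMap.mulRight R y.unop)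
    (fun x x' y => by ext z; simp [add_mul])
    (fun c x y => by ext z; simp [smul_mul_assoc])
    (fun x y y' => by ext z; simp [mul_add])
    (fun c x y => by ext z; simp [mul_smul_comm, smul_mul_assoc])

/-- Azumaya algebra: finitely generated projective faithful module whose sandwich map
`A ⊗[R] Aᵐᵒᵖ → End_R(A)` is bijective. -/
def IsAzumayaAlg (R A : Type*) [CommRing R] [Ring A] [Algebra R A] : Prop :=
  Module.Finite R A ∧ Module.Projective R A ∧ FaithfulSMul R A ∧
    Function.Bijective (azumayaMap R A)

/-- Central simple algebra over a field: finite-dimensional, center `k`, simple. -/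
def IsCentralSimple (k A : Type*) [Field k] [Ring A] [Algebra k A] : Prop :=
  FiniteDimensional k A ∧ Subalgebra.center k A = ⊥ ∧ IsSimpleRing A

theorem Module.Projective.trans {R A M : Type*} [CommSemiring R] [Semiring A] [Algebra R A]
    [AddCommMonoid M] [Module A M] [Module R M] [IsScalarTower R A M]
    [Module.Projective R A] [Module.Projective A M] : Module.Projective R M := by
  classical
  have : Module.Projective R (M →₀ A) :=
    .of_equiv (finsuppLequivDFinsupp (R := R) (M := A) (ι := M)).symm
  obtain ⟨s, hs⟩ := Module.projective_def.mp ‹Module.Projective A M›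
  exact .of_split (s.restrictScalars R) ((Finsupp.linearCombination A id).restrictScalars R)
    (LinearMap.ext hs)

theorem Module.iSup_range_dual_eq_top {R P : Type*} [CommRing R] [AddCommGroup P] [Module R P]
    [Module.Finite R P] [Module.Projective R P] [FaithfulSMul R P] :
    ⨆ φ : Module.Dual R P, LinearMap.range φ = ⊤ := by
  set T := ⨆ φ : Module.Dual R P, LinearMap.range φ
  have hT : (⊤ : Submodule R P) ≤ T • ⊤ := by
    obtain ⟨s, hs⟩ := Module.projective_def'.mp ‹Module.Projective R P›
    intro x _
    rw [← LinearMap.id_apply (R := R) x, ← hs, LinearMap.comp_apply,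
      Finsupp.linearCombination_apply]
    refine Submodule.finsuppSum_mem _ _ _ _ fun p _ => Submodule.smul_mem_smul ?_ trivial
    exact Submodule.mem_iSup_of_mem (Finsupp.lapply p ∘ₗ s) ⟨x, rfl⟩
  obtain ⟨r, hr1, hr0⟩ :=
    Submodule.exists_sub_one_mem_and_smul_eq_zero_of_fg_of_le_smul T ⊤ Module.Finite.fg_top hT
  have hr : r = 0 := eq_of_smul_eq_smul fun x : P => by rw [hr0 x trivial, zero_smul]
  rw [Ideal.eq_top_iff_one]
  simpa [hr] using T.neg_mem hr1

theorem exists_dual_apply_one_eq_one {R A : Type*} [CommRing R] [Ring A] [Algebra R A]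
    [Module.Finite R A] [Module.Projective R A] [FaithfulSMul R A] :
    ∃ f : Module.Dual R A, f 1 = 1 := by
  have h : ⨆ φ : Module.Dual R A, LinearMap.range φ ≤
      LinearMap.range (LinearMap.applyₗ (R := R) (M := A) (M₂ := R) 1) :=
    iSup_le fun φ => by
      rintro _ ⟨x, rfl⟩
      exact ⟨φ ∘ₗ LinearMap.mulLeft R x, by simp⟩
  rw [Module.iSup_range_dual_eq_top] at h
  exact h Submodule.mem_top

section Sandwich

variable {R A M N : Type*} [CommSemiring R] [Semiring A] [Algebra R A]
  [AddCommMonoid M] [Module A M] [Module R M] [IsScalarTower R A M]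
  [AddCommMonoid N] [Module A N] [Module R N] [IsScalarTower R A N]

noncomputable def sandwich (s : M →ₗ[R] N) : A ⊗[R] Aᵐᵒᵖ →ₗ[R] M →ₗ[R] N :=
  TensorProduct.lift <| LinearMap.mk₂ R
    (fun x y => DistribSMul.toLinearMap R N x ∘ₗ s ∘ₗ DistribSMul.toLinearMap R M y.unop)
    (fun x x' y => by ext m; simp [add_smul])
    (fun c x y => by ext m; simp [smul_assoc])
    (fun x y y' => by ext m; simp [add_smul])
    (fun c x y => by ext m; simp [smul_assoc])

@[simp]
theorem sandwich_tmul (s : M →ₗ[R] N) (x : A) (y : Aᵐᵒᵖ) (m : M) :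
    sandwich s (x ⊗ₜ[R] y) m = x • s (y.unop • m) :=
  rfl

theorem sandwich_tmul_one_mul (s : M →ₗ[R] N) (a : A) (t : A ⊗[R] Aᵐᵒᵖ) (m : M) :
    sandwich s ((a ⊗ₜ[R] 1) * t) m = a • sandwich s t m := by
  induction t with
  | zero => simp
  | add t t' ht ht' => simp [mul_add, ht, ht']
  | tmul x y => simp [mul_smul]

theorem sandwich_one_tmul_mul (s : M →ₗ[R] N) (a : A) (t : A ⊗[R] Aᵐᵒᵖ) (m : M) :
    sandwich s ((1 ⊗ₜ[R] MulOpposite.op a) * t) m = sandwich s t (a • m) := by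
  induction t with
  | zero => simp
  | add t t' ht ht' => simp [mul_add, ht, ht']
  | tmul x y => simp [mul_smul]

theorem LinearMap.map_sandwich_apply {P : Type*} [AddCommMonoid P] [Module A P] [Module R P]
    [IsScalarTower R A P] (π : N →ₗ[A] P) (s : M →ₗ[R] N) (t : A ⊗[R] Aᵐᵒᵖ) (m : M) :
    π (sandwich s t m) = sandwich (π.restrictScalars R ∘ₗ s) t m := by
  induction t with
  | zero => simp
  | add t t' ht ht' => simp [ht, ht']
  | tmul x y => simp

end Sandwich

section Separability

variable {R A : Type*} [CommRing R] [Ring A] [Algebra R A]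

@[simp]
theorem azumayaMap_tmul (x : A) (y : Aᵐᵒᵖ) (z : A) :
    azumayaMap R A (x ⊗ₜ[R] y) z = x * z * y.unop := by
  simp [azumayaMap, mul_assoc]

theorem azumayaMap_mul (s t : A ⊗[R] Aᵐᵒᵖ) :
    azumayaMap R A (s * t) = azumayaMap R A s * azumayaMap R A t := by
  induction s with
  | zero => simp
  | add s s' hs hs' => simp [add_mul, hs, hs']
  | tmul x y =>
    induction t with
    | zero => simp
    | add t t' ht ht' => simp [mul_add, ht, ht']
    | tmul x' y' => ext z; simp [mul_assoc]

theorem sandwich_id_apply {M : Type*} [AddCommGroup M] [Module A M] [Module R M]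
    [IsScalarTower R A M] (t : A ⊗[R] Aᵐᵒᵖ) (m : M) :
    sandwich LinearMap.id t m = azumayaMap R A t 1 • m := by
  induction t with
  | zero => simp
  | add t t' ht ht' => simp [ht, ht', add_smul]
  | tmul x y => simp [mul_smul]

variable (R) in
/-- `e = ∑ xᵢ ⊗ yᵢ` with `∑ a xᵢ ⊗ yᵢ = ∑ xᵢ ⊗ yᵢ a` for all `a`, and `∑ xᵢ yᵢ = 1`. -/
structure IsSeparabilityElement (e : A ⊗[R] Aᵐᵒᵖ) : Prop where
  tmul_one_mul : ∀ a : A, (a ⊗ₜ[R] 1) * e = (1 ⊗ₜ[R] MulOpposite.op a) * e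
  azumayaMap_apply_one : azumayaMap R A e 1 = 1

theorem IsAzumayaAlg.exists_isSeparabilityElement (hA : IsAzumayaAlg R A) :
    ∃ e : A ⊗[R] Aᵐᵒᵖ, IsSeparabilityElement R e := by
  obtain ⟨_, _, _, hbij⟩ := hA
  obtain ⟨f, hf⟩ := exists_dual_apply_one_eq_one (R := R) (A := A)
  obtain ⟨e, he⟩ := hbij.surjective (f.smulRight (1 : A))
  refine ⟨e, fun a => hbij.injective ?_, by simp [he, hf]⟩
  ext z
  simp [azumayaMap_mul, he]

namespace IsSeparabilityElement

variable {M N : Type*} [AddCommGroup M] [Module A M] [Module R M] [IsScalarTower R A M]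
  [AddCommGroup N] [Module A N] [Module R N] [IsScalarTower R A N]

noncomputable def averagedMap {e : A ⊗[R] Aᵐᵒᵖ} (he : IsSeparabilityElement R e)
    (s : M →ₗ[R] N) : M →ₗ[A] N where
  __ := sandwich s e
  map_smul' a m := by
    simp [← sandwich_tmul_one_mul, he.tmul_one_mul, sandwich_one_tmul_mul]

theorem comp_averagedMap {e : A ⊗[R] Aᵐᵒᵖ} (he : IsSeparabilityElement R e) {π : N →ₗ[A] M}
    {s : M →ₗ[R] N} (hs : π.restrictScalars R ∘ₗ s = .id) :
    π ∘ₗ he.averagedMap s = .id := by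
  ext m
  simp [averagedMap, LinearMap.map_sandwich_apply, hs, sandwich_id_apply,
    he.azumayaMap_apply_one]

theorem projective {e : A ⊗[R] Aᵐᵒᵖ} (he : IsSeparabilityElement R e) [Module.Projective R M] :
    Module.Projective A M :=
  .of_split (he.averagedMap (TensorProduct.mk R A M 1))
    (AlgebraTensorModule.lift (LinearMap.toSpanSingleton A (M →ₗ[R] M) LinearMap.id))
    (he.comp_averagedMap (by ext; simp))

end IsSeparabilityElement

end Separability

theorem stmt16 {R A M : Type*} [CommRing R] [Ring A] [Algebra R A] (hA : IsAzumayaAlg R A)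
    [AddCommGroup M] [Module A M] [Module R M] [IsScalarTower R A M] :
    (Module.Finite A M ∧ Module.Projective A M) ↔
      (Module.Finite R M ∧ Module.Projective R M) := by
  have : Module.Finite R A := hA.1
  have : Module.Projective R A := hA.2.1
  obtain ⟨e, he⟩ := hA.exists_isSeparabilityElement
  exact ⟨fun ⟨_, _⟩ => ⟨.trans A M, .trans (A := A)⟩,
    fun ⟨_, _⟩ => ⟨.of_restrictScalars_finite R A M, he.projective⟩⟩
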